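/- Let 𝒢=(G,w) be a pruned positive-weighted graph with V(G)={1,...,n}, and write D_{i,j}=D_{i,j}(𝒢). Then G contains a subgraph that is a subdivision of K_{3,3} if and only if there exist disjoint 3-element subsets A,B of [n] such that for any a ∈ A and b ∈ B, either D_{a,b} is indecomposable, or there exists a sequence (x₁,...,x_r) of vertices in [n]∖(A∪B) (depending on {a,b}) such that D_{a,x₁}, D_{x₁,x₂}, ..., D_{x_r,b} are all indecomposable, and such that for distinct pairs {a,b} ≠ {a',b'} (with a,a' ∈ A, b,b' ∈ B) the corresponding sequences do not intersect. -/

import Mathlib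

open SimpleGraph

variable {V : Type*}

/-- weight of a walk: sum of the weights of its edges -/
noncomputable def walkWeight (G : SimpleGraph V) (w : Sym2 V → ℝ) {i j : V} (p : G.Walk i j) : ℝ :=
  (p.edges.map w).sum

/-- the 2-weight: min over paths joining i and j -/
noncomputable def wdist (G : SimpleGraph V) (w : Sym2 V → ℝ) (i j : V) : ℝ :=
  sInf {x : ℝ | ∃ p : G.Walk i j, p.IsPath ∧ walkWeight G w p = x}

def Realizes (G : SimpleGraph V) (w : Sym2 V → ℝ) {i j : V} (p : G.Walk i j) : Prop :=
  p.IsPath ∧ walkWeight G w p = wdist G w i j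

def UsefulEdge (G : SimpleGraph V) (w : Sym2 V → ℝ) (e : Sym2 V) : Prop :=
  ∃ a b : V, a ≠ b ∧ ∀ p : G.Walk a b, Realizes G w p → e ∈ p.edges

def Pruned (G : SimpleGraph V) (w : Sym2 V → ℝ) : Prop :=
  ∀ e ∈ G.edgeSet, UsefulEdge G w e

def PosWeights (G : SimpleGraph V) (w : Sym2 V → ℝ) : Prop :=
  ∀ e ∈ G.edgeSet, 0 < w e

def Indec (G : SimpleGraph V) (w : Sym2 V → ℝ) (i j : V) : Prop :=
  ∀ z : V, z ≠ i → z ≠ j → wdist G w i j < wdist G w i z + wdist G w z j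

def IsLeaf (G : SimpleGraph V) (v : V) : Prop := (G.neighborSet v).ncard = 1

def IsSnake (G : SimpleGraph V) : Prop :=
  G.IsTree ∧ {v : V | IsLeaf G v}.ncard = 2

def IsCaterpillar (G : SimpleGraph V) : Prop :=
  G.IsTree ∧ ∃ (x₁ x₂ : V) (p : G.Walk x₁ x₂), p.IsPath ∧
    {v : V | v ∈ p.support} = {v : V | 2 ≤ (G.neighborSet v).ncard}

def IsPolygon {n : ℕ} [NeZero n] (G : SimpleGraph (Fin n)) : Prop :=
  ∃ σ : Equiv.Perm (Fin n), G.edgeSet = Set.range (fun i : Fin n => s(σ i, σ (i + 1)))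

noncomputable def tmin (G : SimpleGraph V) (w : Sym2 V → ℝ) (x : V) : ℝ :=
  (1 / 2) * sInf {r : ℝ | ∃ y z : V, y ≠ x ∧ z ≠ x ∧ y ≠ z ∧
    r = wdist G w x y + wdist G w x z - wdist G w y z}

def IsBipartiteOn (G : SimpleGraph V) (X Y : Set V) : Prop :=
  X ∩ Y = ∅ ∧ X ∪ Y = Set.univ ∧ ∀ a b : V, G.Adj a b → (a ∈ X ∧ b ∈ Y) ∨ (a ∈ Y ∧ b ∈ X)

noncomputable def chainSum {α : Type*} (D : α → α → ℝ) : List α → ℝ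
  | [] => 0
  | [_] => 0
  | a :: b :: l => D a b + chainSum D (b :: l)

def FIndec {n : ℕ} (D : Fin n → Fin n → ℝ) (i j : Fin n) : Prop :=
  ∀ z : Fin n, z ≠ i → z ≠ j → D i j < D i z + D z j

def TriangleIneq {n : ℕ} (D : Fin n → Fin n → ℝ) : Prop :=
  ∀ i j k : Fin n, i ≠ j → j ≠ k → i ≠ k → D i j ≤ D i k + D k j

def MaxTwice (x y z : ℝ) : Prop :=
  (x = y ∧ z ≤ x) ∨ (x = z ∧ y ≤ x) ∨ (y = z ∧ x ≤ y)

def FourPoint {n : ℕ} (D : Fin n → Fin n → ℝ) : Prop :=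
  ∀ i j k h : Fin n, i ≠ j → i ≠ k → i ≠ h → j ≠ k → j ≠ h → k ≠ h →
    MaxTwice (D i j + D k h) (D i k + D j h) (D i h + D k j)

def MedianFamily {n : ℕ} (D : Fin n → Fin n → ℝ) : Prop :=
  ∀ a b c : Fin n, ∃! m : Fin n,
    ∀ i ∈ ({a, b, c} : Set (Fin n)), ∀ j ∈ ({a, b, c} : Set (Fin n)), i ≠ j →
      D i j = D i m + D j m

noncomputable def tminF {n : ℕ} (D : Fin n → Fin n → ℝ) (x : Fin n) : ℝ :=
  (1 / 2) * sInf {r : ℝ | ∃ y z : Fin n, y ≠ x ∧ z ≠ x ∧ y ≠ z ∧ r = D x y + D x z - D y z}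

def interiorSet {G : SimpleGraph V} {u v : V} (p : G.Walk u v) : Set V :=
  {x : V | x ∈ p.support ∧ x ≠ u ∧ x ≠ v}

/-- `G` contains a subgraph that is a subdivision of `K₃,₃`: there are two disjoint triples of
branch vertices and a system of pairwise internally disjoint paths joining each vertex of one
triple to each vertex of the other, whose interior vertices avoid the branch vertices. -/
def ContainsSubdivisionK33 (G : SimpleGraph V) : Prop :=
  ∃ f g : Fin 3 → V, Function.Injective f ∧ Function.Injective g ∧
    (∀ a b : Fin 3, f a ≠ g b) ∧
    ∃ P : ∀ a b : Fin 3, G.Walk (f a) (g b),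
      (∀ a b : Fin 3, (P a b).IsPath) ∧
      (∀ a b : Fin 3, ∀ x ∈ interiorSet (P a b), x ∉ Set.range f ∪ Set.range g) ∧
      (∀ a b a' b' : Fin 3, (a ≠ a' ∨ b ≠ b') →
        ∀ x ∈ interiorSet (P a b), x ∉ (P a' b').support)

/-! In a pruned graph with positive weights, two distinct vertices have an indecomposable 2-weight
exactly when they are adjacent. One direction holds in any graph: an interior vertex `z` of a path
realizing `D_{x,y}` gives `D_{x,z} + D_{z,y} ≤ D_{x,y}`. Conversely, if an edge `uv` had
`D_{u,z} + D_{z,v} ≤ D_{u,v}`, then replacing `uv` in a realizing path by realizing paths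
`u → z → v` would give a realizing path avoiding `uv`, so `uv` would not be useful.
Hence sequences of consecutive indecomposable 2-weights are exactly walks in `G`, and the
condition on `A`, `B` describes the branch vertices and the subdivided edges of a `K₃,₃`. -/

section Weights

variable {G : SimpleGraph V} {w : Sym2 V → ℝ}

lemma walkWeight_append {u v x : V} (p : G.Walk u v) (q : G.Walk v x) :
    walkWeight G w (p.append q) = walkWeight G w p + walkWeight G w q := by
  simp [walkWeight]

lemma walkWeight_reverse {u v : V} (p : G.Walk u v) :
    walkWeight G w p.reverse = walkWeight G w p := by
  simp [walkWeight, List.sum_reverse]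

lemma walkWeight_takeUntil_add_dropUntil [DecidableEq V] {u v x : V} (p : G.Walk u v)
    (hx : x ∈ p.support) :
    walkWeight G w (p.takeUntil x hx) + walkWeight G w (p.dropUntil x hx) = walkWeight G w p := by
  rw [← walkWeight_append, p.take_spec hx]

lemma walkWeight_pos (hw : PosWeights G w) {u v : V} (huv : u ≠ v) (p : G.Walk u v) :
    0 < walkWeight G w p := by
  refine List.sum_pos _ (fun _ he => ?_) ?_
  · obtain ⟨e, he', rfl⟩ := List.mem_map.mp he
    exact hw e (p.edges_subset_edgeSet he')
  · simpa [Walk.edges_eq_nil] using fun h => huv h.eq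

lemma walkWeight_bypass_le [DecidableEq V] (hw : PosWeights G w) {u v : V} (p : G.Walk u v) :
    walkWeight G w p.bypass ≤ walkWeight G w p :=
  (p.edges_bypass_sublist_edges.map w).sum_le_sum fun _ he => by
    obtain ⟨e, he', rfl⟩ := List.mem_map.mp he
    exact (hw e (p.edges_subset_edgeSet he')).le

lemma wdist_comm (i j : V) : wdist G w i j = wdist G w j i := by
  unfold wdist
  congr 1
  ext x
  constructor <;>
  · rintro ⟨p, hp, rfl⟩
    exact ⟨p.reverse, hp.reverse, walkWeight_reverse p⟩

end Weights

section TwoWeights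

variable [Finite V] {G : SimpleGraph V} {w : Sym2 V → ℝ}

lemma finite_pathWeights (i j : V) :
    {x : ℝ | ∃ p : G.Walk i j, p.IsPath ∧ walkWeight G w p = x}.Finite := by
  classical
  have := Fintype.ofFinite V
  refine (Set.finite_range fun p : G.Path i j => walkWeight G w p.1).subset ?_
  rintro _ ⟨p, hp, rfl⟩
  exact ⟨⟨p, hp⟩, rfl⟩

lemma SimpleGraph.Reachable.exists_realizes {i j : V} (h : G.Reachable i j) :
    ∃ p : G.Walk i j, Realizes G w p := by
  classical
  obtain ⟨p⟩ := h
  have hne : {x : ℝ | ∃ p : G.Walk i j, p.IsPath ∧ walkWeight G w p = x}.Nonempty :=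
    ⟨_, p.bypass, p.bypass_isPath, rfl⟩
  obtain ⟨q, hq, hqw⟩ := hne.csInf_mem (finite_pathWeights i j)
  exact ⟨q, hq, hqw⟩

lemma wdist_le_walkWeight {i j : V} {p : G.Walk i j} (hp : p.IsPath) :
    wdist G w i j ≤ walkWeight G w p :=
  csInf_le (finite_pathWeights i j).bddBelow ⟨p, hp, rfl⟩

lemma wdist_add_wdist_le_walkWeight {i j x : V} {p : G.Walk i j} (hp : p.IsPath)
    (hx : x ∈ p.support) : wdist G w i x + wdist G w x j ≤ walkWeight G w p := by
  classical
  rw [← walkWeight_takeUntil_add_dropUntil p hx]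
  exact add_le_add (wdist_le_walkWeight (hp.takeUntil hx)) (wdist_le_walkWeight (hp.dropUntil hx))

lemma wdist_pos (hw : PosWeights G w) {i j : V} (h : G.Reachable i j) (hij : i ≠ j) :
    0 < wdist G w i j := by
  obtain ⟨p, -, hpw⟩ := h.exists_realizes (w := w)
  exact hpw ▸ walkWeight_pos hw hij p

lemma adj_of_indec {x y : V} (hxy : G.Reachable x y) (h : Indec G w x y) (hne : x ≠ y) :
    G.Adj x y := by
  obtain ⟨p, hp, hpw⟩ := hxy.exists_realizes (w := w)
  have hsupp : ∀ z ∈ p.support, z = x ∨ z = y := by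
    intro z hz
    by_contra! hz'
    linarith [wdist_add_wdist_le_walkWeight (w := w) hp hz, h z hz'.1 hz'.2]
  cases p with
  | nil => exact absurd rfl hne
  | cons hadj q =>
    obtain hc | rfl := hsupp _ (List.mem_cons_of_mem _ q.start_mem_support)
    · exact absurd hc hadj.ne'
    · exact hadj

lemma exists_realizes_not_mem_edges (hw : PosWeights G w) (hconn : G.Connected)
    {a b u v z : V} (huv : G.Adj u v) (ru : G.Walk a u) (rv : G.Walk v b)
    (hp : Realizes G w ((ru.append huv.toWalk).append rv))
    (hz : wdist G w u z + wdist G w z v ≤ wdist G w u v) (hzu : z ≠ u) (hzv : z ≠ v) :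
    ∃ q : G.Walk a b, Realizes G w q ∧ s(u, v) ∉ q.edges := by
  classical
  obtain ⟨hpath, hpw⟩ := hp
  obtain ⟨q₁, hq₁, hq₁w⟩ := (hconn.preconnected u z).exists_realizes (w := w)
  obtain ⟨q₂, hq₂, hq₂w⟩ := (hconn.preconnected z v).exists_realizes (w := w)
  set W := ru.append ((q₁.append q₂).append rv)
  have hWw : walkWeight G w W.bypass ≤ wdist G w a b := calc
    _ ≤ walkWeight G w W := walkWeight_bypass_le hw W
    _ = walkWeight G w ru + (wdist G w u z + wdist G w z v) + walkWeight G w rv := by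
      simp only [W, walkWeight_append, hq₁w, hq₂w]; ring
    _ ≤ walkWeight G w ru + walkWeight G w huv.toWalk + walkWeight G w rv := by
      grw [hz, wdist_le_walkWeight huv.isPath_toWalk]
    _ = wdist G w a b := by rw [← hpw, walkWeight_append, walkWeight_append]
  refine ⟨W.bypass, ⟨W.bypass_isPath, le_antisymm hWw (wdist_le_walkWeight W.bypass_isPath)⟩,
    fun he => ?_⟩
  have hnodup := hpath.isTrail.edges_nodup
  simp only [Walk.edges_append, Adj.toWalk, Walk.edges_cons, Walk.edges_nil] at hnodup
  rw [List.nodup_append, List.nodup_append] at hnodup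
  replace he := W.edges_bypass_subset_edges he
  simp only [W, Walk.edges_append, List.mem_append] at he
  -- `uv` on `q₁` (resp. `q₂`) would force `D_{v,z} + D_{z,v} ≤ 0` (resp. `D_{u,z} + D_{z,u} ≤ 0`).
  rcases he with he | (he | he) | he
  · exact hnodup.1.2.2 _ he _ (List.mem_singleton_self _) rfl
  · have := wdist_add_wdist_le_walkWeight (w := w) hq₁
      (q₁.snd_mem_support_of_mem_edges he)
    linarith [wdist_comm (G := G) (w := w) z v, wdist_pos hw (hconn.preconnected v z) hzv.symm]
  · have := wdist_add_wdist_le_walkWeight (w := w) hq₂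
      (q₂.fst_mem_support_of_mem_edges he)
    linarith [wdist_comm (G := G) (w := w) z u, wdist_pos hw (hconn.preconnected u z) hzu.symm]
  · exact hnodup.2.2 _ (List.mem_append_right _ (List.mem_singleton_self _)) _ he rfl

lemma indec_of_adj (hw : PosWeights G w) (hconn : G.Connected) (hpruned : Pruned G w)
    {u v : V} (huv : G.Adj u v) : Indec G w u v := by
  intro z hzu hzv
  by_contra! hz
  obtain ⟨a, b, -, huse⟩ := hpruned s(u, v) huv
  obtain ⟨p, hp⟩ := (hconn.preconnected a b).exists_realizes (w := w)
  obtain ⟨ru, rv, rfl⟩ | ⟨ru, rv, rfl⟩ :=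
    (Walk.isSubwalk_toWalk_iff_mem_edges huv).mpr (huse _ hp)
  · obtain ⟨q, hq, hqe⟩ := exists_realizes_not_mem_edges hw hconn huv ru rv hp hz hzu hzv
    exact hqe (huse q hq)
  · rw [wdist_comm u z, wdist_comm z v, wdist_comm u v, add_comm] at hz
    obtain ⟨q, hq, hqe⟩ := exists_realizes_not_mem_edges hw hconn huv.symm ru rv hp hz hzv hzu
    exact hqe (Sym2.eq_swap ▸ huse q hq)

end TwoWeights

namespace SimpleGraph.Walk

variable {G : SimpleGraph V}

def innerSupport {x y : V} (p : G.Walk x y) : List V := p.support.tail.dropLast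

lemma support_eq_cons_innerSupport_append {x y : V} (p : G.Walk x y) (hxy : x ≠ y) :
    p.support = x :: (p.innerSupport ++ [y]) := by
  cases p with
  | nil => exact absurd rfl hxy
  | cons h q =>
    have hq := List.dropLast_append_getLast q.support_ne_nil
    rw [q.getLast_support] at hq
    simp [innerSupport, hq]

lemma isChain_adj_cons_innerSupport_append {x y : V} (p : G.Walk x y) (hxy : x ≠ y) :
    (x :: (p.innerSupport ++ [y])).IsChain G.Adj :=
  p.support_eq_cons_innerSupport_append hxy ▸ p.isChain_adj_support

lemma IsPath.mem_interiorSet_of_mem_innerSupport {x y v : V} {p : G.Walk x y} (hp : p.IsPath)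
    (hxy : x ≠ y) (hv : v ∈ p.innerSupport) : v ∈ interiorSet p := by
  have hnd := hp.support_nodup
  rw [p.support_eq_cons_innerSupport_append hxy, List.nodup_cons, List.nodup_append] at hnd
  refine ⟨by rw [p.support_eq_cons_innerSupport_append hxy]; simp [hv], ?_, ?_⟩
  · rintro rfl
    exact hnd.1 (List.mem_append_left _ hv)
  · rintro rfl
    exact hnd.2.2.2 _ hv _ (List.mem_singleton_self _) rfl

end SimpleGraph.Walk

lemma exists_walk_support_subset_of_isChain {G : SimpleGraph V} {R : V → V → Prop}
    (hR : ∀ ⦃x y⦄, R x y → x ≠ y → G.Adj x y) :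
    ∀ (l : List V) {x y : V}, (x :: (l ++ [y])).IsChain R →
      ∃ p : G.Walk x y, p.support ⊆ x :: (l ++ [y])
  | [], x, y, h => by
    by_cases hxy : x = y
    · subst hxy
      exact ⟨.nil, by simp⟩
    · exact ⟨(hR (List.isChain_pair.mp h) hxy).toWalk, by simp⟩
  | z :: l, x, y, h => by
    rw [List.cons_append, List.isChain_cons_cons] at h
    obtain ⟨p, hp⟩ := exists_walk_support_subset_of_isChain hR l h.2
    by_cases hxz : x = z
    · subst hxz
      exact ⟨p, fun _ hv => List.mem_cons_of_mem _ (hp hv)⟩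
    · exact ⟨.cons (hR h.1 hxz) p, by simpa using List.cons_subset_cons _ hp⟩

lemma exists_isPath_interiorSet_subset_of_isChain {G : SimpleGraph V} {R : V → V → Prop}
    (hR : ∀ ⦃x y⦄, R x y → x ≠ y → G.Adj x y) {l : List V} {x y : V}
    (h : (x :: (l ++ [y])).IsChain R) :
    ∃ p : G.Walk x y, p.IsPath ∧ ∀ v ∈ interiorSet p, v ∈ l := by
  classical
  obtain ⟨p, hp⟩ := exists_walk_support_subset_of_isChain hR l h
  refine ⟨p.bypass, p.bypass_isPath, fun v ⟨hv, hvx, hvy⟩ => ?_⟩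
  simpa [hvx, hvy] using hp (p.support_bypass_subset_support hv)

lemma rel_and_eq_nil_or_isChain_iff {α : Type*} {R : α → α → Prop} {q : α → Prop}
    {a b : α} {l : List α} :
    (R a b ∧ l = []) ∨ (l ≠ [] ∧ (∀ v ∈ l, q v) ∧ (a :: (l ++ [b])).IsChain R) ↔
      (∀ v ∈ l, q v) ∧ (a :: (l ++ [b])).IsChain R := by
  cases l <;> simp

def HasK33Chains (R : V → V → Prop) : Prop :=
  ∃ A B : Finset V, A.card = 3 ∧ B.card = 3 ∧ Disjoint A B ∧
    ∃ c : V → V → List V,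
      (∀ a ∈ A, ∀ b ∈ B,
        ((R a b ∧ c a b = []) ∨
          (c a b ≠ [] ∧ (∀ v ∈ c a b, v ∉ A ∧ v ∉ B) ∧
            (a :: (c a b ++ [b])).IsChain R))) ∧
      (∀ a ∈ A, ∀ b ∈ B, ∀ a' ∈ A, ∀ b' ∈ B, (a ≠ a' ∨ b ≠ b') →
        ∀ v ∈ c a b, v ∉ c a' b')

variable {G : SimpleGraph V} {R : V → V → Prop}

lemma ContainsSubdivisionK33.hasK33Chains (hAdj : ∀ ⦃x y⦄, G.Adj x y → R x y)
    (h : ContainsSubdivisionK33 G) : HasK33Chains R := by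
  classical
  obtain ⟨f, g, hf, hg, hfg, P, hP, hPbranch, hPdisj⟩ := h
  set c : V → V → List V := fun x y =>
    (P (Function.invFun f x) (Function.invFun g y)).innerSupport
  have hc : ∀ i j, c (f i) (g j) = (P i j).innerSupport := by
    intro i j
    simp only [c]
    rw [Function.leftInverse_invFun hf i, Function.leftInverse_invFun hg j]
  have hinner : ∀ i j, ∀ v ∈ c (f i) (g j), v ∈ interiorSet (P i j) := fun i j v hv =>
    (hP i j).mem_interiorSet_of_mem_innerSupport (hfg i j) (hc i j ▸ hv)
  refine ⟨.image f .univ, .image g .univ, by simp [Finset.card_image_of_injective _ hf],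
    by simp [Finset.card_image_of_injective _ hg], ?_, c, ?_, ?_⟩
  · simpa [Finset.disjoint_left] using fun i j => (hfg i j).symm
  · simp only [Finset.mem_image, Finset.mem_univ, true_and, forall_exists_index,
      forall_apply_eq_imp_iff, rel_and_eq_nil_or_isChain_iff]
    refine fun i j => ⟨fun v hv => ?_,
      hc i j ▸ ((P i j).isChain_adj_cons_innerSupport_append (hfg i j)).imp hAdj⟩
    simpa using hPbranch i j v (hinner i j v hv)
  · simp only [Finset.mem_image, Finset.mem_univ, true_and, forall_exists_index,
      forall_apply_eq_imp_iff, hf.ne_iff, hg.ne_iff]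
    exact fun i j i' j' hne v hv hv' =>
      hPdisj i j i' j' hne v (hinner i j v hv) (hinner i' j' v hv').1

lemma Finset.exists_injective_forall_mem_of_card_eq {s : Finset V} {n : ℕ} (hs : s.card = n) :
    ∃ f : Fin n → V, Function.Injective f ∧ ∀ i, f i ∈ s :=
  ⟨fun i => (s.equivFinOfCardEq hs).symm i, Subtype.val_injective.comp (Equiv.injective _),
    fun i => ((s.equivFinOfCardEq hs).symm i).2⟩

lemma HasK33Chains.containsSubdivisionK33 (hR : ∀ ⦃x y⦄, R x y → x ≠ y → G.Adj x y)
    (h : HasK33Chains R) : ContainsSubdivisionK33 G := by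
  obtain ⟨A, B, hA, hB, hAB, c, hchain, hdisj⟩ := h
  simp only [rel_and_eq_nil_or_isChain_iff] at hchain
  obtain ⟨f, hf, hfA⟩ := A.exists_injective_forall_mem_of_card_eq hA
  obtain ⟨g, hg, hgB⟩ := B.exists_injective_forall_mem_of_card_eq hB
  have hfg : ∀ i j, f i ≠ g j := fun i j h => Finset.disjoint_left.mp hAB (hfA i) (h ▸ hgB j)
  have houtside : ∀ i j, ∀ v ∈ c (f i) (g j), v ∉ A ∧ v ∉ B := fun i j =>
    (hchain _ (hfA i) _ (hgB j)).1
  choose P hP hPc using fun i j =>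
    exists_isPath_interiorSet_subset_of_isChain hR (hchain _ (hfA i) _ (hgB j)).2
  refine ⟨f, g, hf, hg, hfg, P, hP, fun i j v hv => ?_, fun i j i' j' hne v hv hv' => ?_⟩
  · obtain ⟨hvA, hvB⟩ := houtside i j v (hPc i j v hv)
    rintro (⟨k, rfl⟩ | ⟨k, rfl⟩)
    · exact hvA (hfA k)
    · exact hvB (hgB k)
  · have hvc := hPc i j v hv
    obtain ⟨hvA, hvB⟩ := houtside i j v hvc
    have hvf : v ≠ f i' := fun h => hvA (h ▸ hfA i')
    have hvg : v ≠ g j' := fun h => hvB (h ▸ hgB j')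
    exact hdisj _ (hfA i) _ (hgB j) _ (hfA i') _ (hgB j') (by simpa [hf.ne_iff, hg.ne_iff])
      v hvc (hPc i' j' v ⟨hv', hvf, hvg⟩)

theorem containsSubdivisionK33_iff_hasK33Chains (hAdj : ∀ ⦃x y⦄, G.Adj x y → R x y)
    (hR : ∀ ⦃x y⦄, R x y → x ≠ y → G.Adj x y) :
    ContainsSubdivisionK33 G ↔ HasK33Chains R :=
  ⟨fun h => h.hasK33Chains hAdj, fun h => h.containsSubdivisionK33 hR⟩

/-- A pruned positive-weighted graph contains a subdivision of `K₃,₃` iff there are disjoint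
3-element sets `A`, `B` of vertices such that each pair `(a, b) ∈ A × B` is joined by a
(possibly empty) sequence of vertices outside `A ∪ B` with all consecutive 2-weights
indecomposable, the sequences attached to distinct pairs being disjoint. -/
theorem stmt_16 {n : ℕ} (G : SimpleGraph (Fin n)) (hconn : G.Connected)
    (w : Sym2 (Fin n) → ℝ) (hw : PosWeights G w) (hpruned : Pruned G w) :
    ContainsSubdivisionK33 G ↔
      ∃ A B : Finset (Fin n), A.card = 3 ∧ B.card = 3 ∧ Disjoint A B ∧
        ∃ c : Fin n → Fin n → List (Fin n),
          (∀ a ∈ A, ∀ b ∈ B,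
            ((Indec G w a b ∧ c a b = []) ∨
              (c a b ≠ [] ∧ (∀ v ∈ c a b, v ∉ A ∧ v ∉ B) ∧
                List.Chain' (Indec G w) (a :: (c a b ++ [b]))))) ∧
          (∀ a ∈ A, ∀ b ∈ B, ∀ a' ∈ A, ∀ b' ∈ B, (a ≠ a' ∨ b ≠ b') →
            ∀ v ∈ c a b, v ∉ c a' b') :=
  containsSubdivisionK33_iff_hasK33Chains (fun _ _ => indec_of_adj hw hconn hpruned)
    (fun x y => adj_of_indec (hconn.preconnected x y))
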